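/- arXiv:1011.0700 — 4 statements merged into one kernel-verified Lean document; each statement's English description precedes it below -/
import Mathlib

section
/- For c = cosh t with t > 0, every point in the orbit {T_c^n(0,0) : n ∈ ℤ} lies on a hyperbola: there is an invertible affine map of ℝ² sending T_c^n(0,0) to (cosh(nt), sinh(nt)) for all n ∈ ℤ. -/
def TcPerm (c : ℝ) : Equiv.Perm (ℝ × ℝ) where
  toFun p := (c * p.1 + (c - 1) * p.2 + 1, (c + 1) * p.1 + c * p.2 + 1)
  invFun p := (c * p.1 + (1 - c) * p.2 - 1, -(c + 1) * p.1 + c * p.2 + 1)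
  left_inv p := by
    obtain ⟨x, y⟩ := p
    simp only [Prod.mk.injEq]
    constructor <;> ring
  right_inv p := by
    obtain ⟨x, y⟩ := p
    simp only [Prod.mk.injEq]
    constructor <;> ring

/-! The affine map `(x, y) ↦ ((cosh t - 1) y + 1, (sinh t) x)` conjugates `T_{cosh t}` to the
hyperbolic rotation by `t` (this is where `cosh² t - sinh² t = 1` enters), and it sends `(0, 0)`
to `(1, 0) = (cosh 0, sinh 0)`. The hyperbolic rotation by `t` in turn moves `(cosh s, sinh s)` to
`(cosh (s + t), sinh (s + t))`, so the `n`-th orbit point is carried to `(cosh (n t), sinh (n t))`. -/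

open Real Function

section Semiconj

variable {α β : Type*} {f : α → β} {e : Equiv.Perm α} {g : Equiv.Perm β}

theorem Function.Semiconj.perm_pow (h : Semiconj f e g) (n : ℕ) :
    Semiconj f ⇑(e ^ n) ⇑(g ^ n) := by
  simpa only [Equiv.Perm.coe_pow] using h.iterate_right n

theorem Function.Semiconj.perm_inv (h : Semiconj f e g) : Semiconj f ⇑e⁻¹ ⇑g⁻¹ :=
  h.inverses_right e.apply_symm_apply g.symm_apply_apply

theorem Function.Semiconj.perm_zpow (h : Semiconj f e g) :
    ∀ n : ℤ, Semiconj f ⇑(e ^ n) ⇑(g ^ n)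
  | (n : ℕ) => by simpa only [zpow_natCast] using h.perm_pow n
  | .negSucc n => by simpa only [zpow_negSucc] using (h.perm_pow (n + 1)).perm_inv

end Semiconj

noncomputable def hyperbolicRotation (t : ℝ) : Equiv.Perm (ℝ × ℝ) where
  toFun p := (cosh t * p.1 + sinh t * p.2, sinh t * p.1 + cosh t * p.2)
  invFun p := (cosh t * p.1 - sinh t * p.2, -sinh t * p.1 + cosh t * p.2)
  left_inv p := Prod.ext (by linear_combination p.1 * cosh_sq_sub_sinh_sq t)
    (by linear_combination p.2 * cosh_sq_sub_sinh_sq t)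
  right_inv p := Prod.ext (by linear_combination p.1 * cosh_sq_sub_sinh_sq t)
    (by linear_combination p.2 * cosh_sq_sub_sinh_sq t)

theorem semiconj_cosh_sinh_hyperbolicRotation (t : ℝ) :
    Semiconj (fun s => (cosh s, sinh s)) (Equiv.addRight t) (hyperbolicRotation t) := fun s => by
  refine Prod.ext ?_ ?_ <;>
    simp only [hyperbolicRotation, Equiv.coe_fn_mk, Equiv.coe_addRight, cosh_add, sinh_add] <;> ring

noncomputable def hyperbolicCoords (t : ℝ) (p : ℝ × ℝ) : ℝ × ℝ :=
  ((cosh t - 1) * p.2 + 1, sinh t * p.1)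

theorem semiconj_hyperbolicCoords_TcPerm (t : ℝ) :
    Semiconj (hyperbolicCoords t) (TcPerm (cosh t)) (hyperbolicRotation t) := fun p => by
  refine Prod.ext ?_ ?_ <;>
    simp only [hyperbolicCoords, TcPerm, hyperbolicRotation, Equiv.coe_fn_mk]
  · linear_combination p.1 * cosh_sq_sub_sinh_sq t
  · ring

theorem hyperbolicCoords_TcPerm_zpow_apply_zero (t : ℝ) (n : ℤ) :
    hyperbolicCoords t ((TcPerm (cosh t) ^ n) (0, 0)) = (cosh (n * t), sinh (n * t)) :=
  calc hyperbolicCoords t ((TcPerm (cosh t) ^ n) (0, 0))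
      = (hyperbolicRotation t ^ n) (hyperbolicCoords t (0, 0)) :=
        (semiconj_hyperbolicCoords_TcPerm t).perm_zpow n _
    _ = (hyperbolicRotation t ^ n) (cosh 0, sinh 0) := by simp [hyperbolicCoords]
    _ = (cosh (n * t), sinh (n * t)) := by
        rw [← (semiconj_cosh_sinh_hyperbolicRotation t).perm_zpow n 0]
        simp

/-- For `c = cosh t` with `t > 0`, there is an invertible affine map of ℝ² sending the
orbit point `T_c^n(0,0)` to `(cosh (n t), sinh (n t))` for every integer `n`; in particular
the orbit lies on a hyperbola. -/
theorem stmt2 (t : ℝ) (ht : 0 < t) :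
    ∃ a b d e : ℝ, ∃ v : ℝ × ℝ, a * e - b * d ≠ 0 ∧
      ∀ n : ℤ, (fun p : ℝ × ℝ => (a * p.1 + b * p.2 + v.1, d * p.1 + e * p.2 + v.2))
          ((TcPerm (Real.cosh t) ^ n) ((0 : ℝ), (0 : ℝ)))
        = (Real.cosh (n * t), Real.sinh (n * t)) := by
  refine ⟨0, cosh t - 1, sinh t, 0, (1, 0), ?_, fun n => ?_⟩
  · have hdet := mul_pos (sub_pos.2 (one_lt_cosh.2 ht.ne')) (sinh_pos_iff.2 ht)
    rw [mul_zero, zero_sub, neg_ne_zero]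
    exact hdet.ne'
  · simp only [zero_mul, zero_add, add_zero]
    exact hyperbolicCoords_TcPerm_zpow_apply_zero t n
end

section
/- The affine map U(x,y) = (-c x + (c-1) y + 1, -(c+1) x + c y + 1) satisfies U ∘ T_c ∘ U⁻¹ = T_c⁻¹ and U is an involution; consequently U swaps the orbit points P_i = T_c^i(0,0) and P_{1-i} for every integer i. -/
/-- The affine map `U(x,y) = (-cx + (c-1)y + 1, -(c+1)x + cy + 1)`. -/
def Umap (c : ℝ) (p : ℝ × ℝ) : ℝ × ℝ :=
  (-c * p.1 + (c - 1) * p.2 + 1, -(c + 1) * p.1 + c * p.2 + 1)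

theorem smul_zpow_smul_eq_zpow_one_sub_smul {G α : Type*} [Group G] [MulAction G α] {u t : G}
    {x : α} (hconj : u * t * u⁻¹ = t⁻¹) (hx : u • x = t • x) (i : ℤ) :
    u • t ^ i • x = t ^ (1 - i) • x := by
  have hconj_zpow : u * t ^ i * u⁻¹ = t ^ (-i) := by
    rw [← conj_zpow, hconj, inv_zpow']
  calc u • t ^ i • x = (u * t ^ i * u⁻¹) • u • x := by simp only [mul_smul, inv_smul_smul]
    _ = t ^ (-i) • t • x := by rw [hconj_zpow, hx]
    _ = t ^ (1 - i) • x := by rw [smul_smul, ← zpow_add_one, neg_add_eq_sub]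

theorem Umap_involutive (c : ℝ) : Function.Involutive (Umap c) := by
  rintro ⟨x, y⟩
  simp only [Umap, Prod.mk.injEq]
  constructor <;> ring

theorem Umap_TcPerm_Umap (c : ℝ) (p : ℝ × ℝ) : Umap c (TcPerm c (Umap c p)) = (TcPerm c)⁻¹ p := by
  obtain ⟨x, y⟩ := p
  simp only [Umap, TcPerm, Equiv.Perm.inv_def, Equiv.coe_fn_mk, Equiv.coe_fn_symm_mk,
    Prod.mk.injEq]
  constructor <;> ring

/-- `U` is an involution, conjugates `T_c` to its inverse (so `U ∘ T_c ∘ U⁻¹ = T_c⁻¹`),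
and consequently swaps the orbit points `P_i = T_c^i(0,0)` and `P_{1-i}`. -/
theorem stmt4 (c : ℝ) :
    (∀ p : ℝ × ℝ, Umap c (Umap c p) = p) ∧
      (∀ p : ℝ × ℝ, Umap c (TcPerm c (Umap c p)) = (TcPerm c)⁻¹ p) ∧
      ∀ i : ℤ, Umap c ((TcPerm c ^ i) ((0 : ℝ), (0 : ℝ)))
        = (TcPerm c ^ (1 - i)) ((0 : ℝ), (0 : ℝ)) := by
  refine ⟨Umap_involutive c, Umap_TcPerm_Umap c, fun i => ?_⟩
  set U := (Umap_involutive c).toPerm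
  have hconj : U * TcPerm c * U⁻¹ = (TcPerm c)⁻¹ := by
    ext1 p
    exact Umap_TcPerm_Umap c p
  have horigin : U • ((0 : ℝ), (0 : ℝ)) = TcPerm c • ((0 : ℝ), (0 : ℝ)) := by
    simp [U, Umap, TcPerm, Equiv.Perm.smul_def]
  exact smul_zpow_smul_eq_zpow_one_sub_smul hconj horigin i
end

section
/- For every integer i, the segment joining P_{1-i} = T_c^{1-i}(0,0) to P_i = T_c^i(0,0) has slope one (its displacement vector is a scalar multiple of (1,1)), provided P_{1-i} ≠ P_i. -/
/-!
The reflection `σ(x,y) = (-x,y)` conjugates `T_c` to its inverse and fixes the origin, so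
`P_{-i} = σ P_i` and `P_{1-i} = T_c (σ P_i)`. For every point `p`, `T_c (σ p) - p` has equal
coordinates, which gives the claim.
-/

def negFst : Equiv.Perm (ℝ × ℝ) := Equiv.prodCongr (Equiv.neg ℝ) (Equiv.refl ℝ)

@[simp]
lemma negFst_apply (p : ℝ × ℝ) : negFst p = (-p.1, p.2) := rfl

lemma negFst_inv : negFst⁻¹ = negFst := by
  ext p <;> simp [Equiv.Perm.inv_def, negFst]

lemma TcPerm_inv_eq_conj (c : ℝ) : (TcPerm c)⁻¹ = negFst * TcPerm c * negFst⁻¹ := by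
  rw [negFst_inv]
  ext p <;>
    simp only [TcPerm, Equiv.Perm.inv_def, Equiv.symm_mk, Equiv.coe_fn_mk, Equiv.Perm.coe_mul,
      Function.comp_apply, negFst_apply] <;> ring

lemma TcPerm_zpow_neg_apply_zero (c : ℝ) (i : ℤ) :
    (TcPerm c ^ (-i)) (0, 0) = negFst ((TcPerm c ^ i) (0, 0)) := by
  rw [zpow_neg, ← inv_zpow, TcPerm_inv_eq_conj, conj_zpow, negFst_inv]
  simp

lemma TcPerm_negFst_sub (c : ℝ) (p : ℝ × ℝ) :
    TcPerm c (negFst p) - p = ((c - 1) * p.2 - (c + 1) * p.1 + 1) • ((1 : ℝ), (1 : ℝ)) := by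
  ext <;>
    simp only [TcPerm, negFst_apply, Equiv.coe_fn_mk, Prod.fst_sub, Prod.snd_sub, Prod.smul_mk,
      smul_eq_mul] <;> ring

theorem stmt5_general (c : ℝ) (i : ℤ) :
    ∃ l : ℝ, (TcPerm c ^ i) ((0 : ℝ), (0 : ℝ)) - (TcPerm c ^ (1 - i)) ((0 : ℝ), (0 : ℝ))
      = l • ((1 : ℝ), (1 : ℝ)) := by
  set p := (TcPerm c ^ i) ((0 : ℝ), (0 : ℝ))
  have hP : (TcPerm c ^ (1 - i)) (0, 0) = TcPerm c (negFst p) := by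
    rw [sub_eq_add_neg, zpow_add, zpow_one, Equiv.Perm.mul_apply, TcPerm_zpow_neg_apply_zero]
  refine ⟨-((c - 1) * p.2 - (c + 1) * p.1 + 1), ?_⟩
  rw [hP, neg_smul, ← TcPerm_negFst_sub, neg_sub]

/-- For `c ≥ 1`, the segment joining `P_{1-i}` to `P_i` has slope one: its displacement
vector is a scalar multiple of `(1,1)`, provided the endpoints are distinct. -/
theorem stmt5 (c : ℝ) (hc : 1 ≤ c) (i : ℤ)
    (hne : (TcPerm c ^ (1 - i)) ((0 : ℝ), (0 : ℝ)) ≠ (TcPerm c ^ i) ((0 : ℝ), (0 : ℝ))) :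
    ∃ l : ℝ, (TcPerm c ^ i) ((0 : ℝ), (0 : ℝ)) - (TcPerm c ^ (1 - i)) ((0 : ℝ), (0 : ℝ))
      = l • ((1 : ℝ), (1 : ℝ)) :=
  stmt5_general c i
end

section
/- The matrices D₁ = [[1,2],[0,1]] and E₁ = [[-1,2],[-2,3]] generate a free subgroup of SL(2,ℝ) (no nontrivial reduced word in D₁ and E₁ equals the identity). -/
/-!
`SL(2,ℝ)` acts on the projective line `ℙ¹(ℝ)`. In the slope coordinate `t = v₀ / v₁`, `D₁` is the
translation `t ↦ t + 2` and `E₁` is a parabolic map fixing `t = 1`. The four arcs `[2, ∞]`,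
`(-∞, 0)`, `[0, 1]` and `(1, 2)` are pairwise disjoint; `D₁` maps the complement of `(-∞, 0)`
into `[2, ∞]` and `D₁⁻¹` maps the complement of `[2, ∞]` into `(-∞, 0)`, and likewise `E₁` and
`E₁⁻¹` with `[0, 1]` and `(1, 2)`, so the ping-pong lemma applies.

An arc whose endpoints are the zeros of two linear forms `ℓ₁`, `ℓ₂` is cut out by the sign of the
quadratic form `ℓ₁ ℓ₂`, which is well defined on projective space. Hence `g` maps the complement
of `{m₁ m₂ < 0}` into `{ℓ₁ ℓ₂ ≤ 0}` (and `g⁻¹` maps the complement of `{ℓ₁ ℓ₂ ≤ 0}` into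
`{m₁ m₂ < 0}`) as soon as `ℓ₁ ℓ₂ ∘ g = -m₁ m₂`, a polynomial identity.
-/

def D1R : Matrix.SpecialLinearGroup (Fin 2) ℝ :=
  ⟨!![1, 2; 0, 1], by norm_num [Matrix.det_fin_two_of]⟩

def E1R : Matrix.SpecialLinearGroup (Fin 2) ℝ :=
  ⟨!![-1, 2; -2, 3], by norm_num [Matrix.det_fin_two_of]⟩

open scoped LinearAlgebra.Projectivization Pointwise

namespace Projectivization

lemma disjoint_of_forall_mk {K V : Type*} [DivisionRing K] [AddCommGroup V] [Module K V]
    {S T : Set (ℙ K V)} (h : ∀ v (hv : v ≠ 0), mk K v hv ∈ S → mk K v hv ∈ T → False) :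
    Disjoint S T :=
  Set.disjoint_left.2 <| ind fun v hv hS hT => h v hv hS hT

variable {V : Type*} [AddCommGroup V] [Module ℝ V]

/-- On a projective line, the closed arc between the zeros of `ℓ₁` and `ℓ₂`. -/
def closedArc (ℓ₁ ℓ₂ : Module.Dual ℝ V) : Set (ℙ ℝ V) := {p | ℓ₁ p.rep * ℓ₂ p.rep ≤ 0}

def openArc (ℓ₁ ℓ₂ : Module.Dual ℝ V) : Set (ℙ ℝ V) := {p | ℓ₁ p.rep * ℓ₂ p.rep < 0}

lemma exists_pos_mul_eq_mul_rep (ℓ₁ ℓ₂ : Module.Dual ℝ V) {v : V} (hv : v ≠ 0) :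
    ∃ c : ℝ, 0 < c ∧ ℓ₁ (mk ℝ v hv).rep * ℓ₂ (mk ℝ v hv).rep = c * (ℓ₁ v * ℓ₂ v) := by
  obtain ⟨a, ha⟩ := exists_smul_eq_mk_rep ℝ v hv
  refine ⟨(a : ℝ) ^ 2, sq_pos_of_ne_zero a.ne_zero, ?_⟩
  rw [← ha, Units.smul_def, map_smul, map_smul, smul_eq_mul, smul_eq_mul]
  ring

lemma mk_mem_closedArc {ℓ₁ ℓ₂ : Module.Dual ℝ V} {v : V} (hv : v ≠ 0) :
    mk ℝ v hv ∈ closedArc ℓ₁ ℓ₂ ↔ ℓ₁ v * ℓ₂ v ≤ 0 := by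
  obtain ⟨c, hc, hrep⟩ := exists_pos_mul_eq_mul_rep ℓ₁ ℓ₂ hv
  rw [closedArc, Set.mem_ofPred_eq, hrep]
  simpa only [mul_zero] using mul_le_mul_iff_of_pos_left (b := ℓ₁ v * ℓ₂ v) (c := 0) hc

lemma mk_mem_openArc {ℓ₁ ℓ₂ : Module.Dual ℝ V} {v : V} (hv : v ≠ 0) :
    mk ℝ v hv ∈ openArc ℓ₁ ℓ₂ ↔ ℓ₁ v * ℓ₂ v < 0 := by
  obtain ⟨c, hc, hrep⟩ := exists_pos_mul_eq_mul_rep ℓ₁ ℓ₂ hv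
  rw [openArc, Set.mem_ofPred_eq, hrep]
  simpa only [mul_zero] using mul_lt_mul_iff_of_pos_left (b := ℓ₁ v * ℓ₂ v) (c := 0) hc

variable {G : Type*} [Group G] [DistribMulAction G V] [SMulCommClass G ℝ V]
  {ℓ₁ ℓ₂ m₁ m₂ : Module.Dual ℝ V} {g : G}

lemma smul_compl_openArc_subset (h : ∀ v, ℓ₁ (g • v) * ℓ₂ (g • v) = -(m₁ v * m₂ v)) :
    g • (openArc m₁ m₂)ᶜ ⊆ closedArc ℓ₁ ℓ₂ := by
  refine Set.smul_set_subset_iff.2 <| ind fun v hv hvm => ?_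
  rw [Set.mem_compl_iff, mk_mem_openArc, not_lt] at hvm
  rw [smul_mk, mk_mem_closedArc, h]
  linarith

lemma inv_smul_compl_closedArc_subset (h : ∀ v, ℓ₁ (g • v) * ℓ₂ (g • v) = -(m₁ v * m₂ v)) :
    g⁻¹ • (closedArc ℓ₁ ℓ₂)ᶜ ⊆ openArc m₁ m₂ := by
  refine Set.smul_set_subset_iff.2 <| ind fun v hv hvℓ => ?_
  rw [Set.mem_compl_iff, mk_mem_closedArc, not_le] at hvℓ
  have hg := h (g⁻¹ • v)
  rw [smul_inv_smul] at hg
  rw [smul_mk, mk_mem_openArc]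
  linarith

end Projectivization

open Matrix Projectivization Function

lemma dotProductEquiv_fin_two_apply {R : Type*} [CommSemiring R] (a b : R) (v : Fin 2 → R) :
    dotProductEquiv R (Fin 2) ![a, b] v = a * v 0 + b * v 1 := by
  rw [dotProductEquiv_apply_apply, vec2_dotProduct, cons_val_zero, cons_val_one, cons_val_zero]

lemma D1R_smul (v : Fin 2 → ℝ) : D1R • v = ![v 0 + 2 * v 1, v 1] := by
  rw [Matrix.SpecialLinearGroup.smul_def]
  ext i; fin_cases i <;> simp [D1R, vecHead, vecTail]

lemma E1R_smul (v : Fin 2 → ℝ) : E1R • v = ![-v 0 + 2 * v 1, -2 * v 0 + 3 * v 1] := by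
  rw [Matrix.SpecialLinearGroup.smul_def]
  ext i; fin_cases i <;> simp [E1R, vecHead, vecTail]

/-- In the slope `t = v₀ / v₁`: `[2, ∞]` for `D₁` and `[0, 1]` for `E₁`. -/
def pingPongX (b : Bool) : Set (ℙ ℝ (Fin 2 → ℝ)) :=
  bif b then closedArc (dotProductEquiv ℝ _ ![0, 1]) (dotProductEquiv ℝ _ ![-1, 2])
  else closedArc (dotProductEquiv ℝ _ ![1, 0]) (dotProductEquiv ℝ _ ![1, -1])

/-- In the slope `t = v₀ / v₁`: `(-∞, 0)` for `D₁` and `(1, 2)` for `E₁`. -/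
def pingPongY (b : Bool) : Set (ℙ ℝ (Fin 2 → ℝ)) :=
  bif b then openArc (dotProductEquiv ℝ _ ![1, 0]) (dotProductEquiv ℝ _ ![0, 1])
  else openArc (dotProductEquiv ℝ _ ![1, -1]) (dotProductEquiv ℝ _ ![1, -2])

lemma pingPong_D1R (v : Fin 2 → ℝ) :
    dotProductEquiv ℝ _ ![0, 1] (D1R • v) * dotProductEquiv ℝ _ ![-1, 2] (D1R • v) =
      -(dotProductEquiv ℝ _ ![1, 0] v * dotProductEquiv ℝ _ ![0, 1] v) := by
  simp only [D1R_smul, dotProductEquiv_fin_two_apply, cons_val_zero, cons_val_one]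
  ring

lemma pingPong_E1R (v : Fin 2 → ℝ) :
    dotProductEquiv ℝ _ ![1, 0] (E1R • v) * dotProductEquiv ℝ _ ![1, -1] (E1R • v) =
      -(dotProductEquiv ℝ _ ![1, -1] v * dotProductEquiv ℝ _ ![1, -2] v) := by
  simp only [E1R_smul, dotProductEquiv_fin_two_apply, cons_val_zero, cons_val_one]
  ring

lemma pairwise_disjoint_pingPongX : Pairwise (Disjoint on pingPongX) := by
  refine pairwise_disjoint_on_bool.2 <| disjoint_of_forall_mk fun v hv hD hE => hv ?_
  simp only [mk_mem_closedArc, dotProductEquiv_fin_two_apply] at hD hE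
  have h₁ : v 1 = 0 := by nlinarith [sq_nonneg (v 0 - v 1), sq_nonneg (v 1)]
  have h₀ : v 0 = 0 := by nlinarith [sq_nonneg (v 0)]
  ext i; fin_cases i <;> assumption

lemma pairwise_disjoint_pingPongY : Pairwise (Disjoint on pingPongY) := by
  refine pairwise_disjoint_on_bool.2 <| disjoint_of_forall_mk fun v _ hD hE => ?_
  simp only [mk_mem_openArc, dotProductEquiv_fin_two_apply] at hD hE
  nlinarith [sq_nonneg (v 0), sq_nonneg (v 1)]

lemma disjoint_pingPongX_pingPongY (i j : Bool) : Disjoint (pingPongX i) (pingPongY j) := by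
  refine disjoint_of_forall_mk fun v _ hX hY => ?_
  cases i <;> cases j <;>
    simp only [pingPongX, pingPongY, cond_true, cond_false, mk_mem_closedArc, mk_mem_openArc,
      dotProductEquiv_fin_two_apply] at hX hY <;>
    nlinarith [sq_nonneg (v 0), sq_nonneg (v 1), sq_nonneg (v 0 - v 1), sq_nonneg (v 0 - 2 * v 1)]

/-- `D₁` and `E₁` generate a free subgroup of `SL(2,ℝ)`: the homomorphism from the free
group on two generators sending them to `D₁` and `E₁` is injective, i.e. no nontrivial
reduced word in `D₁`, `E₁` equals the identity. -/
theorem stmt13 :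
    Function.Injective (FreeGroup.lift (fun b : Bool => if b then D1R else E1R)) := by
  refine FreeGroup.injective_lift_of_ping_pong _ pingPongX pingPongY ?_
    pairwise_disjoint_pingPongX pairwise_disjoint_pingPongY disjoint_pingPongX_pingPongY ?_ ?_
  · rintro (_ | _)
    · exact ⟨mk ℝ ![1, 1] (by simp), by simp [pingPongX, mk_mem_closedArc]⟩
    · exact ⟨mk ℝ ![1, 0] (by simp), by simp [pingPongX, mk_mem_closedArc]⟩
  · rintro (_ | _)
    exacts [smul_compl_openArc_subset pingPong_E1R, smul_compl_openArc_subset pingPong_D1R]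
  · rintro (_ | _)
    exacts [inv_smul_compl_closedArc_subset pingPong_E1R,
      inv_smul_compl_closedArc_subset pingPong_D1R]
end
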